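/- arXiv:1612.00930 — 2 statements merged into one kernel-verified Lean document; each statement's English description precedes it below -/
import Mathlib

section
/- For a finite group G, g ∈ G, and an integer k ≥ 1, every finite-dimensional irreducible complex representation of Λ^k_G(g) is of the form ρ⊙χ : [h, t] ↦ χ(t)·ρ(h) for a pair (ρ, χ), where ρ is a finite-dimensional irreducible complex representation of C_G(g) and χ : ℝ → ℂˣ is a group homomorphism with ρ(g) = χ(k)·id; moreover (ρ, χ) ↦ ρ⊙χ is a bijection between such pairs (with ρ taken up to isomorphism) and isomorphism classes of finite-dimensional irreducible complex representations of Λ^k_G(g). -/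
/-!
The elements `[1, t]` are central in `Λ^k_G(g)`, so by Schur's lemma an irreducible `Rho` acts
on them by scalars `χ(t)`, and with `ρ(h) := Rho [h, 0]` one gets `Rho [h, t] = χ(t) • ρ(h)`;
the relation `[g, 0] = [1, k]` is then exactly `ρ(g) = χ(k) • id`. Conversely, under that
condition `(h, t) ↦ χ(t) • ρ(h)` kills `(g, -k)` and descends to `Λ^k_G(g)`. As `Rho` and `ρ`
have the same invariant subspaces, irreducibility passes both ways, and an isomorphism
`Rho ≅ Rho'` restricts to `ρ ≅ ρ'` and, evaluated at `[1, t]`, forces `χ = χ'`.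
-/

noncomputable section

/-- The element `g` as an element of its own centralizer. -/
def gElem {G : Type} [Group G] (g : G) : Subgroup.centralizer ({g} : Set G) :=
  ⟨g, by rw [Subgroup.mem_centralizer_iff]; rintro h rfl; rfl⟩

/-- The central element `(g, -k)` of `C_G(g) × ℝ`. -/
def zElem {G : Type} [Group G] (g : G) (k : ℤ) :
    Subgroup.centralizer ({g} : Set G) × Multiplicative ℝ :=
  (gElem g, Multiplicative.ofAdd (-(k : ℝ)))

theorem zElem_comm {G : Type} [Group G] (g : G) (k : ℤ)
    (x : Subgroup.centralizer ({g} : Set G) × Multiplicative ℝ) :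
    Commute x (zElem g k) := by
  have h1 : x.1 * gElem g = gElem g * x.1 := by
    apply Subtype.ext
    exact (Subgroup.mem_centralizer_iff.mp x.1.2 g rfl).symm
  exact Prod.ext h1 (mul_comm _ _)

/-- The subgroup of `C_G(g) × ℝ` generated by `(g, -k)`. -/
def lambdaRel {G : Type} [Group G] (g : G) (k : ℤ) :
    Subgroup (Subgroup.centralizer ({g} : Set G) × Multiplicative ℝ) :=
  Subgroup.zpowers (zElem g k)

instance lambdaRel_normal {G : Type} [Group G] (g : G) (k : ℤ) : (lambdaRel g k).Normal := by
  constructor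
  intro n hn x
  rw [lambdaRel, Subgroup.mem_zpowers_iff] at hn
  obtain ⟨m, rfl⟩ := hn
  have h := ((zElem_comm g k x).zpow_right m).eq
  rw [h, mul_inv_cancel_right]
  exact Subgroup.zpow_mem_zpowers _ m

/-- The group `Λ^k_G(g) = (C_G(g) × ℝ)/⟨(g,-k)⟩`. -/
def LambdaK (G : Type) [Group G] (g : G) (k : ℤ) : Type :=
  (Subgroup.centralizer ({g} : Set G) × Multiplicative ℝ) ⧸ lambdaRel g k

instance (G : Type) [Group G] (g : G) (k : ℤ) : Group (LambdaK G g k) :=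
  inferInstanceAs (Group ((Subgroup.centralizer ({g} : Set G) × Multiplicative ℝ) ⧸ lambdaRel g k))

/-- The group `Λ_G(g) = (C_G(g) × ℝ)/⟨(g,-1)⟩`. -/
abbrev Lambda (G : Type) [Group G] (g : G) : Type := LambdaK G g 1

/-- The class `[h, t]` in `Λ^k_G(g)`. -/
def lmk {G : Type} [Group G] {g : G} {k : ℤ} (h : Subgroup.centralizer ({g} : Set G))
    (t : ℝ) : LambdaK G g k :=
  QuotientGroup.mk (h, Multiplicative.ofAdd t)

end
noncomputable section

/-- A representation (valued in `GL(V)`) is irreducible: `V ≠ 0` and the only invariant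
subspaces are `⊥` and `⊤`. -/
def IsIrreducibleRep {M : Type} [Monoid M] {V : Type} [AddCommGroup V] [Module ℂ V]
    (rho : M →* (V →ₗ[ℂ] V)ˣ) : Prop :=
  (∃ v : V, v ≠ 0) ∧
    ∀ W : Submodule ℂ V,
      (∀ (m : M) (v : V), v ∈ W → (rho m : V →ₗ[ℂ] V) v ∈ W) → W = ⊥ ∨ W = ⊤

/-- Isomorphism of representations. -/
def RepIso {M : Type} [Monoid M] {V V' : Type} [AddCommGroup V] [Module ℂ V]
    [AddCommGroup V'] [Module ℂ V']
    (rho : M →* (V →ₗ[ℂ] V)ˣ) (rho' : M →* (V' →ₗ[ℂ] V')ˣ) : Prop :=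
  ∃ e : V ≃ₗ[ℂ] V',
    ∀ (m : M) (v : V), e ((rho m : V →ₗ[ℂ] V) v) = (rho' m : V' →ₗ[ℂ] V') (e v)

/-- `Rho = rho ⊙ chi` on `Λ^k_G(g)`, i.e. `Rho [h, t] = chi(t) • rho(h)`. -/
def SmashEqK {G : Type} [Group G] {g : G} {k : ℤ} {V : Type} [AddCommGroup V] [Module ℂ V]
    (Rho : LambdaK G g k →* (V →ₗ[ℂ] V)ˣ)
    (rho : Subgroup.centralizer ({g} : Set G) →* (V →ₗ[ℂ] V)ˣ)
    (chi : Multiplicative ℝ →* ℂˣ) : Prop :=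
  ∀ (h : Subgroup.centralizer ({g} : Set G)) (t : ℝ),
    (Rho (lmk h t) : V →ₗ[ℂ] V) =
      (chi (Multiplicative.ofAdd t) : ℂ) • (rho h : V →ₗ[ℂ] V)

/-- The compatibility condition `rho(g) = chi(k) • id`. -/
def SmashCondK {G : Type} [Group G] (g : G) (k : ℤ) {V : Type} [AddCommGroup V] [Module ℂ V]
    (rho : Subgroup.centralizer ({g} : Set G) →* (V →ₗ[ℂ] V)ˣ)
    (chi : Multiplicative ℝ →* ℂˣ) : Prop :=
  (rho (gElem g) : V →ₗ[ℂ] V) =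
    (chi (Multiplicative.ofAdd (k : ℝ)) : ℂ) • (LinearMap.id : V →ₗ[ℂ] V)

section Representation

variable {V : Type} [AddCommGroup V] [Module ℂ V]

theorem IsIrreducibleRep.nontrivial {M : Type} [Monoid M] {rho : M →* (V →ₗ[ℂ] V)ˣ}
    (hrho : IsIrreducibleRep rho) : Nontrivial V :=
  let ⟨v, hv⟩ := hrho.1
  nontrivial_of_ne v 0 hv

/-- Schur's lemma: the eigenspace of `f` is a nonzero invariant subspace, hence everything. -/
theorem IsIrreducibleRep.exists_eq_smul_id [FiniteDimensional ℂ V] {M : Type} [Monoid M]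
    {rho : M →* (V →ₗ[ℂ] V)ˣ} (hrho : IsIrreducibleRep rho) (f : Module.End ℂ V)
    (hf : ∀ m, Commute f (rho m)) : ∃ c : ℂ, f = c • LinearMap.id := by
  have := hrho.nontrivial
  obtain ⟨c, hc⟩ := Module.End.exists_eigenvalue f
  have htop : f.eigenspace c = ⊤ :=
    (hrho.2 _ fun m _ hv => Module.End.mapsTo_genEigenspace_of_comm (hf m) c 1 hv).resolve_left hc
  exact ⟨c, LinearMap.ext fun v => Module.End.mem_eigenspace_iff.mp (htop ▸ Submodule.mem_top)⟩

def scalarUnits : ℂˣ →* (V →ₗ[ℂ] V)ˣ :=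
  Units.map (algebraMap ℂ (Module.End ℂ V)).toMonoidHom

theorem coe_scalarUnits (c : ℂˣ) :
    ((scalarUnits c : (V →ₗ[ℂ] V)ˣ) : V →ₗ[ℂ] V) = (c : ℂ) • LinearMap.id :=
  rfl

theorem commute_scalarUnits (c : ℂˣ) (f : (V →ₗ[ℂ] V)ˣ) : Commute (scalarUnits c) f :=
  Units.ext (Algebra.commutes (c : ℂ) (f : V →ₗ[ℂ] V))

theorem scalarUnits_injective [Nontrivial V] : Function.Injective (scalarUnits (V := V)) :=
  Units.map_injective (algebraMap ℂ (Module.End ℂ V)).injective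

theorem MonoidHom.exists_units_of_forall_eq_smul_id [Nontrivial V] {N : Type} [Monoid N]
    (φ : N →* (V →ₗ[ℂ] V)ˣ) (hφ : ∀ n, ∃ c : ℂ, (φ n : V →ₗ[ℂ] V) = c • LinearMap.id) :
    ∃ χ : N →* ℂˣ, ∀ n, (φ n : V →ₗ[ℂ] V) = (χ n : ℂ) • LinearMap.id := by
  have hrange : ∀ n, φ n ∈ (scalarUnits (V := V)).range := by
    intro n
    obtain ⟨c, hc⟩ := hφ n
    have hc0 : c ≠ 0 := by
      rintro rfl
      exact (φ n).ne_zero (by rw [hc, zero_smul])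
    exact ⟨Units.mk0 c hc0, Units.ext (by rw [coe_scalarUnits, hc]; rfl)⟩
  refine ⟨(MonoidHom.ofInjective scalarUnits_injective).symm.toMonoidHom.comp
    (φ.codRestrict _ hrange), fun n => ?_⟩
  rw [← coe_scalarUnits]
  exact congrArg Units.val
    (MonoidHom.apply_ofInjective_symm scalarUnits_injective ⟨_, hrange n⟩).symm

end Representation

section LambdaK

variable {G : Type} [Group G] {g : G} {k : ℤ}

theorem lmk_mul (h h' : Subgroup.centralizer ({g} : Set G)) (t t' : ℝ) :
    (lmk h t : LambdaK G g k) * lmk h' t' = lmk (h * h') (t + t') :=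
  rfl

theorem lmk_surjective (x : LambdaK G g k) :
    ∃ (h : Subgroup.centralizer ({g} : Set G)) (t : ℝ), x = lmk h t := by
  obtain ⟨⟨h, t⟩, rfl⟩ := QuotientGroup.mk_surjective x
  exact ⟨h, t.toAdd, rfl⟩

theorem lmk_eq_lmk_zero_mul (h : Subgroup.centralizer ({g} : Set G)) (t : ℝ) :
    (lmk h t : LambdaK G g k) = lmk h 0 * lmk 1 t := by
  rw [lmk_mul, mul_one, zero_add]

theorem commute_lmk_one (x : LambdaK G g k) (t : ℝ) : Commute x (lmk 1 t) := by
  obtain ⟨h, s, rfl⟩ := lmk_surjective x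
  show lmk h s * lmk 1 t = lmk 1 t * lmk h s
  rw [lmk_mul, lmk_mul, mul_one, one_mul, add_comm]

theorem lmk_gElem_zero : (lmk (gElem g) 0 : LambdaK G g k) = lmk 1 k := by
  refine QuotientGroup.eq.2 ?_
  have : (gElem g, Multiplicative.ofAdd (0 : ℝ))⁻¹ * (1, Multiplicative.ofAdd (k : ℝ)) =
      (zElem g k)⁻¹ := by
    ext <;> simp [zElem]
  rw [this]
  exact inv_mem (Subgroup.mem_zpowers _)

end LambdaK

section Smash

variable {G : Type} [Group G] {g : G} {k : ℤ} {V : Type} [AddCommGroup V] [Module ℂ V]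
  {Rho : LambdaK G g k →* (V →ₗ[ℂ] V)ˣ} {rho : Subgroup.centralizer ({g} : Set G) →* (V →ₗ[ℂ] V)ˣ}
  {chi : Multiplicative ℝ →* ℂˣ}

theorem SmashEqK.apply_lmk_zero (hs : SmashEqK Rho rho chi)
    (h : Subgroup.centralizer ({g} : Set G)) : (Rho (lmk h 0) : V →ₗ[ℂ] V) = rho h := by
  rw [hs, ofAdd_zero, map_one, Units.val_one, one_smul]

theorem SmashEqK.smashCondK (hs : SmashEqK Rho rho chi) : SmashCondK g k rho chi := by
  rw [SmashCondK, ← hs.apply_lmk_zero, lmk_gElem_zero, hs, map_one, Units.val_one]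
  rfl

theorem SmashEqK.forall_mem_iff (hs : SmashEqK Rho rho chi) (W : Submodule ℂ V) :
    (∀ (x : LambdaK G g k) (v : V), v ∈ W → (Rho x : V →ₗ[ℂ] V) v ∈ W) ↔
      ∀ (h : Subgroup.centralizer ({g} : Set G)) (v : V), v ∈ W → (rho h : V →ₗ[ℂ] V) v ∈ W := by
  refine ⟨fun hW h v hv => hs.apply_lmk_zero h ▸ hW _ v hv, fun hW x v hv => ?_⟩
  obtain ⟨h, t, rfl⟩ := lmk_surjective x
  rw [hs, LinearMap.smul_apply]
  exact W.smul_mem _ (hW h v hv)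

theorem SmashEqK.isIrreducibleRep_iff (hs : SmashEqK Rho rho chi) :
    IsIrreducibleRep Rho ↔ IsIrreducibleRep rho := by
  simp only [IsIrreducibleRep, hs.forall_mem_iff]

theorem SmashEqK.unique {Rho' : LambdaK G g k →* (V →ₗ[ℂ] V)ˣ} (hs : SmashEqK Rho rho chi)
    (hs' : SmashEqK Rho' rho chi) : Rho = Rho' := by
  ext1 x
  obtain ⟨h, t, rfl⟩ := lmk_surjective x
  exact Units.ext ((hs h t).trans (hs' h t).symm)

theorem exists_smashEqK (hc : SmashCondK g k rho chi) : ∃ Rho : LambdaK G g k →* (V →ₗ[ℂ] V)ˣ,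
    SmashEqK Rho rho chi := by
  let prodRep := rho.noncommCoprod (scalarUnits.comp chi)
    fun _ _ => (commute_scalarUnits _ _).symm
  have hrel : lambdaRel g k ≤ prodRep.ker := by
    refine Subgroup.zpowers_le.2 (MonoidHom.mem_ker.2 (Units.ext ?_))
    show ((rho (gElem g) * scalarUnits (chi (Multiplicative.ofAdd (-(k : ℝ))))
      : (V →ₗ[ℂ] V)ˣ) : V →ₗ[ℂ] V) = 1
    rw [Units.val_mul, hc, coe_scalarUnits, smul_mul_smul_comm, ← Units.val_mul, ← map_mul,
      ← ofAdd_add, add_neg_cancel, ofAdd_zero, map_one, Units.val_one, one_smul]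
    rfl
  refine ⟨QuotientGroup.lift _ prodRep hrel, fun h t => ?_⟩
  show ((rho h * scalarUnits (chi (Multiplicative.ofAdd t)) : (V →ₗ[ℂ] V)ˣ) : V →ₗ[ℂ] V) = _
  rw [Units.val_mul, coe_scalarUnits, mul_smul_comm, Module.End.mul_eq_comp, LinearMap.comp_id]

theorem IsIrreducibleRep.exists_smashEqK [FiniteDimensional ℂ V] (hRho : IsIrreducibleRep Rho) :
    ∃ (rho : Subgroup.centralizer ({g} : Set G) →* (V →ₗ[ℂ] V)ˣ) (chi : Multiplicative ℝ →* ℂˣ),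
      SmashEqK Rho rho chi := by
  have := hRho.nontrivial
  let onReals := Rho.comp ((QuotientGroup.mk' (lambdaRel g k)).comp (MonoidHom.inr _ _))
  obtain ⟨chi, hchi⟩ := onReals.exists_units_of_forall_eq_smul_id fun t =>
    hRho.exists_eq_smul_id _ fun x => ((commute_lmk_one x t.toAdd).map Rho).units_val.symm
  refine ⟨Rho.comp ((QuotientGroup.mk' (lambdaRel g k)).comp (MonoidHom.inl _ _)), chi,
    fun h t => ?_⟩
  rw [lmk_eq_lmk_zero_mul, map_mul, Units.val_mul, show Rho (lmk 1 t) = onReals (.ofAdd t) from rfl,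
    hchi, mul_smul_comm, Module.End.mul_eq_comp, LinearMap.comp_id]
  rfl

theorem SmashEqK.repIso {V' : Type} [AddCommGroup V'] [Module ℂ V']
    {Rho' : LambdaK G g k →* (V' →ₗ[ℂ] V')ˣ}
    {rho' : Subgroup.centralizer ({g} : Set G) →* (V' →ₗ[ℂ] V')ˣ} {chi' : Multiplicative ℝ →* ℂˣ}
    (hs : SmashEqK Rho rho chi) (hs' : SmashEqK Rho' rho' chi') (hiso : RepIso Rho Rho') :
    RepIso rho rho' := by
  obtain ⟨e, he⟩ := hiso
  refine ⟨e, fun h v => ?_⟩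
  simpa only [hs.apply_lmk_zero, hs'.apply_lmk_zero] using he (lmk h 0) v

theorem SmashEqK.eq_of_repIso [Nontrivial V] {V' : Type} [AddCommGroup V'] [Module ℂ V']
    {Rho' : LambdaK G g k →* (V' →ₗ[ℂ] V')ˣ}
    {rho' : Subgroup.centralizer ({g} : Set G) →* (V' →ₗ[ℂ] V')ˣ} {chi' : Multiplicative ℝ →* ℂˣ}
    (hs : SmashEqK Rho rho chi) (hs' : SmashEqK Rho' rho' chi') (hiso : RepIso Rho Rho') :
    chi = chi' := by
  obtain ⟨e, he⟩ := hiso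
  obtain ⟨v, hv⟩ := exists_ne (0 : V)
  ext t
  have hcomm := he (lmk 1 t) v
  rw [hs, hs', map_one, map_one, Units.val_one, Units.val_one, LinearMap.smul_apply,
    LinearMap.smul_apply, Module.End.one_apply, Module.End.one_apply, map_smul] at hcomm
  exact smul_left_injective ℂ (e.map_ne_zero_iff.2 hv) hcomm

end Smash

theorem lambdaK_irreducibles_classified_general (G : Type) [Group G] (g : G)
    (k : ℤ) :
    -- every irreducible representation of `Λ^k_G(g)` has the form `ρ ⊙ χ`
    (∀ (V : Type) [AddCommGroup V] [Module ℂ V] [FiniteDimensional ℂ V]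
        (Rho : LambdaK G g k →* (V →ₗ[ℂ] V)ˣ), IsIrreducibleRep Rho →
        ∃ (rho : Subgroup.centralizer ({g} : Set G) →* (V →ₗ[ℂ] V)ˣ)
          (chi : Multiplicative ℝ →* ℂˣ),
          IsIrreducibleRep rho ∧ SmashCondK g k rho chi ∧ SmashEqK Rho rho chi) ∧
    -- the assignment is well defined and lands in irreducibles
    (∀ (V : Type) [AddCommGroup V] [Module ℂ V] [FiniteDimensional ℂ V]
        (rho : Subgroup.centralizer ({g} : Set G) →* (V →ₗ[ℂ] V)ˣ)
        (chi : Multiplicative ℝ →* ℂˣ),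
        IsIrreducibleRep rho → SmashCondK g k rho chi →
        ∃ Rho : LambdaK G g k →* (V →ₗ[ℂ] V)ˣ,
          SmashEqK Rho rho chi ∧
          IsIrreducibleRep Rho ∧
          ∀ Rho' : LambdaK G g k →* (V →ₗ[ℂ] V)ˣ, SmashEqK Rho' rho chi → Rho' = Rho) ∧
    -- injectivity on isomorphism classes
    (∀ (V V' : Type) [AddCommGroup V] [Module ℂ V] [FiniteDimensional ℂ V]
        [AddCommGroup V'] [Module ℂ V'] [FiniteDimensional ℂ V']
        (rho : Subgroup.centralizer ({g} : Set G) →* (V →ₗ[ℂ] V)ˣ)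
        (rho' : Subgroup.centralizer ({g} : Set G) →* (V' →ₗ[ℂ] V')ˣ)
        (chi chi' : Multiplicative ℝ →* ℂˣ)
        (Rho : LambdaK G g k →* (V →ₗ[ℂ] V)ˣ) (Rho' : LambdaK G g k →* (V' →ₗ[ℂ] V')ˣ),
        IsIrreducibleRep rho → IsIrreducibleRep rho' →
        SmashCondK g k rho chi → SmashCondK g k rho' chi' →
        SmashEqK Rho rho chi → SmashEqK Rho' rho' chi' →
        RepIso Rho Rho' → RepIso rho rho' ∧ chi = chi') := by
  refine ⟨fun V _ _ _ Rho hRho => ?_, fun V _ _ _ rho chi hrho hc => ?_, ?_⟩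
  · obtain ⟨rho, chi, hs⟩ := hRho.exists_smashEqK
    exact ⟨rho, chi, hs.isIrreducibleRep_iff.mp hRho, hs.smashCondK, hs⟩
  · obtain ⟨Rho, hs⟩ := exists_smashEqK hc
    exact ⟨Rho, hs, hs.isIrreducibleRep_iff.mpr hrho, fun Rho' hs' => hs'.unique hs⟩
  · intro V V' _ _ _ _ _ _ rho rho' chi chi' Rho Rho' hrho _ _ _ hs hs' hiso
    have := hrho.nontrivial
    exact ⟨hs.repIso hs' hiso, hs.eq_of_repIso hs' hiso⟩

/-- Every finite-dimensional irreducible representation of `Λ^k_G(g)`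
is of the form `ρ ⊙ χ`, and `(ρ, χ) ↦ ρ ⊙ χ` is a bijection between pairs
(`ρ` an irreducible representation of `C_G(g)` up to isomorphism, `χ : ℝ → ℂˣ`
with `ρ(g) = χ(k)·id`) and isomorphism classes of finite-dimensional irreducible
representations of `Λ^k_G(g)`. -/
theorem lambdaK_irreducibles_classified (G : Type) [Group G] [Finite G] (g : G)
    (k : ℤ) (hk : 1 ≤ k) :
    -- every irreducible representation of `Λ^k_G(g)` has the form `ρ ⊙ χ`
    (∀ (V : Type) [AddCommGroup V] [Module ℂ V] [FiniteDimensional ℂ V]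
        (Rho : LambdaK G g k →* (V →ₗ[ℂ] V)ˣ), IsIrreducibleRep Rho →
        ∃ (rho : Subgroup.centralizer ({g} : Set G) →* (V →ₗ[ℂ] V)ˣ)
          (chi : Multiplicative ℝ →* ℂˣ),
          IsIrreducibleRep rho ∧ SmashCondK g k rho chi ∧ SmashEqK Rho rho chi) ∧
    -- the assignment is well defined and lands in irreducibles
    (∀ (V : Type) [AddCommGroup V] [Module ℂ V] [FiniteDimensional ℂ V]
        (rho : Subgroup.centralizer ({g} : Set G) →* (V →ₗ[ℂ] V)ˣ)
        (chi : Multiplicative ℝ →* ℂˣ),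
        IsIrreducibleRep rho → SmashCondK g k rho chi →
        ∃ Rho : LambdaK G g k →* (V →ₗ[ℂ] V)ˣ,
          SmashEqK Rho rho chi ∧
          IsIrreducibleRep Rho ∧
          ∀ Rho' : LambdaK G g k →* (V →ₗ[ℂ] V)ˣ, SmashEqK Rho' rho chi → Rho' = Rho) ∧
    -- injectivity on isomorphism classes
    (∀ (V V' : Type) [AddCommGroup V] [Module ℂ V] [FiniteDimensional ℂ V]
        [AddCommGroup V'] [Module ℂ V'] [FiniteDimensional ℂ V']
        (rho : Subgroup.centralizer ({g} : Set G) →* (V →ₗ[ℂ] V)ˣ)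
        (rho' : Subgroup.centralizer ({g} : Set G) →* (V' →ₗ[ℂ] V')ˣ)
        (chi chi' : Multiplicative ℝ →* ℂˣ)
        (Rho : LambdaK G g k →* (V →ₗ[ℂ] V)ˣ) (Rho' : LambdaK G g k →* (V' →ₗ[ℂ] V')ˣ),
        IsIrreducibleRep rho → IsIrreducibleRep rho' →
        SmashCondK g k rho chi → SmashCondK g k rho' chi' →
        SmashEqK Rho rho chi → SmashEqK Rho' rho' chi' →
        RepIso Rho Rho' → RepIso rho rho' ∧ chi = chi') :=
  lambdaK_irreducibles_classified_general G g k

end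
end

section
/- For finite groups G and H and elements σ ∈ G, τ ∈ H, the map [(α, β), t] ↦ ([α, t], [β, t]) is a group isomorphism from Λ_{G×H}((σ, τ)) onto the fiber product Λ_G(σ) ×_{ℝ/ℤ} Λ_H(τ) := {(x, y) ∈ Λ_G(σ) × Λ_H(τ) : π(x) = π(y)}, where π denotes the projection [h, t] ↦ t mod ℤ on each factor. (Here one uses that C_{G×H}((σ, τ)) = C_G(σ) × C_H(τ).) -/
noncomputable section

/-- `ℝ → ℝ/ℤ` as a monoid hom of multiplicative groups. -/
def circleHom : Multiplicative ℝ →* Multiplicative (AddCircle (1 : ℝ)) :=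
  AddMonoidHom.toMultiplicative (QuotientAddGroup.mk' (AddSubgroup.zmultiples (1 : ℝ)))

/-- `(h, t) ↦ t mod ℤ` on `C_G(g) × ℝ`. -/
def piPre (G : Type) [Group G] (g : G) :
    (Subgroup.centralizer ({g} : Set G) × Multiplicative ℝ) →*
      Multiplicative (AddCircle (1 : ℝ)) :=
  circleHom.comp (MonoidHom.snd _ _)

theorem piPre_ker (G : Type) [Group G] (g : G) : lambdaRel g 1 ≤ (piPre G g).ker := by
  intro x hx
  rw [lambdaRel, Subgroup.mem_zpowers_iff] at hx
  obtain ⟨m, rfl⟩ := hx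
  rw [MonoidHom.mem_ker, map_zpow]
  have hz : piPre G g (zElem g 1) = 1 := by
    show Multiplicative.ofAdd (((-(1:ℤ) : ℝ) : AddCircle (1:ℝ))) = 1
    have : ((-(1:ℤ) : ℝ) : AddCircle (1:ℝ)) = 0 := by
      push_cast
      rw [show ((-1 : ℝ) : AddCircle (1:ℝ)) = -((1:ℝ) : AddCircle (1:ℝ)) by
        exact (QuotientAddGroup.mk_neg _ _), AddCircle.coe_period, neg_zero]
    rw [this]; rfl
  rw [hz, one_zpow]

/-- The map `π : Λ_G(g) → ℝ/ℤ`, `[h,t] ↦ t mod ℤ`. -/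
def piHom (G : Type) [Group G] (g : G) :
    Lambda G g →* Multiplicative (AddCircle (1 : ℝ)) :=
  QuotientGroup.lift _ (piPre G g) (piPre_ker G g)

/-- The map `ι : C_G(g) → Λ_G(g)`, `h ↦ [h, 0]`. -/
def iotaHom (G : Type) [Group G] (g : G) :
    Subgroup.centralizer ({g} : Set G) →* Lambda G g :=
  (QuotientGroup.mk' (lambdaRel g 1)).comp (MonoidHom.inl _ _)

theorem fst_mem_centralizer {G H : Type} [Group G] [Group H] {s : G} {t : H}
    (a : Subgroup.centralizer ({(s, t)} : Set (G × H))) :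
    (a : G × H).1 ∈ Subgroup.centralizer ({s} : Set G) := by
  rw [Subgroup.mem_centralizer_iff]
  rintro x rfl
  have h := Subgroup.mem_centralizer_iff.mp a.2 (x, t) rfl
  exact congrArg Prod.fst h

theorem snd_mem_centralizer {G H : Type} [Group G] [Group H] {s : G} {t : H}
    (a : Subgroup.centralizer ({(s, t)} : Set (G × H))) :
    (a : G × H).2 ∈ Subgroup.centralizer ({t} : Set H) := by
  rw [Subgroup.mem_centralizer_iff]
  rintro x rfl
  have h := Subgroup.mem_centralizer_iff.mp a.2 (s, x) rfl
  exact congrArg Prod.snd h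

/-- The fiber product `Λ_G(σ) ×_{ℝ/ℤ} Λ_H(τ)`. -/
def lambdaFiberProd (G H : Type) [Group G] [Group H] (s : G) (t : H) :
    Subgroup (Lambda G s × Lambda H t) where
  carrier := {p | piHom G s p.1 = piHom H t p.2}
  mul_mem' := by
    intro a b ha hb
    simp only [Set.mem_setOf_eq] at *
    show piHom G s (a.1 * b.1) = piHom H t (a.2 * b.2)
    rw [map_mul, map_mul, ha, hb]
  one_mem' := by
    simp only [Set.mem_setOf_eq]
    show piHom G s 1 = piHom H t 1
    rw [map_one, map_one]
  inv_mem' := by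
    intro a ha
    simp only [Set.mem_setOf_eq] at *
    show piHom G s a.1⁻¹ = piHom H t a.2⁻¹
    rw [map_inv, map_inv, ha]

theorem prod_mem_centralizer {G H : Type} [Group G] [Group H] {s : G} {t : H}
    {x : G} {y : H} (hx : x ∈ Subgroup.centralizer ({s} : Set G))
    (hy : y ∈ Subgroup.centralizer ({t} : Set H)) :
    (x, y) ∈ Subgroup.centralizer ({(s, t)} : Set (G × H)) := by
  rw [Subgroup.mem_centralizer_iff]
  rintro _ rfl
  exact Prod.ext (Subgroup.mem_centralizer_iff.mp hx s rfl)
    (Subgroup.mem_centralizer_iff.mp hy t rfl)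

def centralizerProdEquiv {G H : Type} [Group G] [Group H] (s : G) (t : H) :
    Subgroup.centralizer ({(s, t)} : Set (G × H)) ≃*
      Subgroup.centralizer ({s} : Set G) × Subgroup.centralizer ({t} : Set H) where
  toFun a :=
    (⟨(a : G × H).1, fst_mem_centralizer a⟩, ⟨(a : G × H).2, snd_mem_centralizer a⟩)
  invFun b := ⟨((b.1 : G), (b.2 : H)), prod_mem_centralizer b.1.2 b.2.2⟩
  left_inv _ := rfl
  right_inv _ := rfl
  map_mul' _ _ := rfl

section LambdaK

variable {G : Type} [Group G]

theorem zElem_zpow (g : G) (k m : ℤ) :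
    zElem g k ^ m = (gElem g ^ m, Multiplicative.ofAdd (-((m : ℝ) * k))) := by
  refine Prod.ext rfl ?_
  change (Multiplicative.ofAdd (-(k : ℝ))) ^ m = _
  rw [← ofAdd_zsmul, zsmul_eq_mul, mul_neg, mul_comm]

theorem mem_lambdaRel_iff {g : G} {k : ℤ}
    {x : Subgroup.centralizer ({g} : Set G) × Multiplicative ℝ} :
    x ∈ lambdaRel g k ↔ ∃ m : ℤ, (gElem g ^ m, Multiplicative.ofAdd (-((m : ℝ) * k))) = x := by
  simp only [lambdaRel, Subgroup.mem_zpowers_iff, zElem_zpow]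

theorem lmk_add_intCast_mul (g : G) (h : Subgroup.centralizer ({g} : Set G)) (k n : ℤ) (r : ℝ) :
    (lmk h (r + n * k) : LambdaK G g k) = lmk (h * gElem g ^ n) r := by
  refine QuotientGroup.eq.mpr (mem_lambdaRel_iff.mpr ⟨n, Prod.ext ?_ ?_⟩)
  · simp
  · change Multiplicative.ofAdd _ = Multiplicative.ofAdd (-(r + n * k)) * Multiplicative.ofAdd r
    rw [← ofAdd_add]
    ring_nf

end LambdaK

theorem exists_intCast_add_of_coe_eq {u v : ℝ}
    (h : (u : AddCircle (1 : ℝ)) = (v : AddCircle (1 : ℝ))) : ∃ n : ℤ, v = u + n := by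
  obtain ⟨n, hn⟩ := AddSubgroup.mem_zmultiples_iff.mp (QuotientAddGroup.eq.mp h)
  exact ⟨n, by rw [zsmul_one] at hn; linarith⟩

section Product

variable {G H : Type} [Group G] [Group H]

theorem mem_lambdaRel_prod_iff {s : G} {t : H} {k : ℤ} (hk : k ≠ 0)
    {x : Subgroup.centralizer ({(s, t)} : Set (G × H)) × Multiplicative ℝ} :
    x ∈ lambdaRel (s, t) k ↔
      ((centralizerProdEquiv s t x.1).1, x.2) ∈ lambdaRel s k ∧
        ((centralizerProdEquiv s t x.1).2, x.2) ∈ lambdaRel t k := by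
  simp only [mem_lambdaRel_iff]
  constructor
  · rintro ⟨m, rfl⟩
    exact ⟨⟨m, rfl⟩, ⟨m, rfl⟩⟩
  · rintro ⟨⟨m, hm⟩, ⟨n, hn⟩⟩
    obtain ⟨hm₁, hm₂⟩ := Prod.ext_iff.mp hm
    obtain ⟨hn₁, hn₂⟩ := Prod.ext_iff.mp hn
    have hmn : m = n := by
      have h := congrArg Multiplicative.toAdd (hm₂.trans hn₂.symm)
      simp only [toAdd_ofAdd, neg_inj, mul_eq_mul_right_iff, Int.cast_inj, Int.cast_eq_zero] at h
      exact h.resolve_right hk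
    subst hmn
    exact ⟨m, Prod.ext (Subtype.ext (Prod.ext (congrArg Subtype.val hm₁)
      (congrArg Subtype.val hn₁))) hm₂⟩

def lambdaProdHom (s : G) (t : H) :
    Subgroup.centralizer ({(s, t)} : Set (G × H)) × Multiplicative ℝ →*
      lambdaFiberProd G H s t where
  toFun x := ⟨(QuotientGroup.mk ((centralizerProdEquiv s t x.1).1, x.2),
    QuotientGroup.mk ((centralizerProdEquiv s t x.1).2, x.2)), rfl⟩
  map_one' := rfl
  map_mul' _ _ := rfl

theorem ker_lambdaProdHom (s : G) (t : H) : (lambdaProdHom s t).ker = lambdaRel (s, t) 1 := by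
  ext x
  rw [mem_lambdaRel_prod_iff one_ne_zero,
    ← QuotientGroup.eq_one_iff ((centralizerProdEquiv s t x.1).1, x.2),
    ← QuotientGroup.eq_one_iff ((centralizerProdEquiv s t x.1).2, x.2)]
  exact Subtype.ext_iff.trans Prod.ext_iff

theorem lambdaProdHom_surjective (s : G) (t : H) : Function.Surjective (lambdaProdHom s t) := by
  rintro ⟨⟨x, y⟩, hxy⟩
  obtain ⟨⟨α, u⟩, rfl⟩ := QuotientGroup.mk_surjective x
  obtain ⟨⟨β, v⟩, rfl⟩ := QuotientGroup.mk_surjective y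
  obtain ⟨n, hn⟩ := exists_intCast_add_of_coe_eq (u := u.toAdd) (v := v.toAdd)
    (congrArg Multiplicative.toAdd hxy)
  have hy : (lmk β v.toAdd : Lambda H t) = lmk (β * gElem t ^ n) u.toAdd := by
    rw [hn, ← lmk_add_intCast_mul, Int.cast_one, mul_one]
  refine ⟨((centralizerProdEquiv s t).symm (α, β * gElem t ^ n), u), Subtype.ext ?_⟩
  exact Prod.ext rfl hy.symm

end Product

theorem lambda_prod_iso_fiberProd_general (G H : Type) [Group G] [Group H]
    (s : G) (t : H) :
    ∃ e : Lambda (G × H) (s, t) ≃* lambdaFiberProd G H s t,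
      ∀ (a : Subgroup.centralizer ({(s, t)} : Set (G × H))) (r : ℝ),
        ((e (lmk a r) : Lambda G s × Lambda H t)) =
          (lmk ⟨(a : G × H).1, fst_mem_centralizer a⟩ r,
           lmk ⟨(a : G × H).2, snd_mem_centralizer a⟩ r) :=
  ⟨QuotientGroup.liftEquiv _ (lambdaProdHom_surjective s t) (ker_lambdaProdHom s t).symm,
    fun _ _ => rfl⟩

/-- `[(α, β), t] ↦ ([α, t], [β, t])` is a group isomorphism
`Λ_{G×H}((σ,τ)) ≅ Λ_G(σ) ×_{ℝ/ℤ} Λ_H(τ)`. -/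
theorem lambda_prod_iso_fiberProd (G H : Type) [Group G] [Group H] [Finite G] [Finite H]
    (s : G) (t : H) :
    ∃ e : Lambda (G × H) (s, t) ≃* lambdaFiberProd G H s t,
      ∀ (a : Subgroup.centralizer ({(s, t)} : Set (G × H))) (r : ℝ),
        ((e (lmk a r) : Lambda G s × Lambda H t)) =
          (lmk ⟨(a : G × H).1, fst_mem_centralizer a⟩ r,
           lmk ⟨(a : G × H).2, snd_mem_centralizer a⟩ r) :=
  lambda_prod_iso_fiberProd_general G H s t

end
end
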